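/- In a cartesian bicategory of relations, a morphism R : X ⟶ Y is a comap (injective and surjective) if and only if it has a left adjoint, i.e. there exists S : Y ⟶ X with id_Y ≤ S ; R and R ; S ≤ id_X; and in that case S = R†. -/

import Mathlib

open CategoryTheory MonoidalCategory

universe v u

/-- A cartesian bicategory of relations: a poset-enriched symmetric monoidal category
in which every object carries a cocommutative comonoid `(dup, del)` and a commutative
monoid `(mrg, bng)`, compatible with the monoidal structure, satisfying the adjunction
inequalities and the Frobenius law, and such that every morphism is a lax comonoid
homomorphism. -/
class CartesianBicatRel (C : Type u) [Category.{v} C] [MonoidalCategory C]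
    [SymmetricCategory C] [∀ X Y : C, PartialOrder (X ⟶ Y)] where
  comp_mono : ∀ {X Y Z : C} {f f' : X ⟶ Y} {g g' : Y ⟶ Z},
    f ≤ f' → g ≤ g' → f ≫ g ≤ f' ≫ g'
  tensor_mono : ∀ {X X' Y Y' : C} {f f' : X ⟶ X'} {g g' : Y ⟶ Y'},
    f ≤ f' → g ≤ g' → (f ⊗ₘ g) ≤ (f' ⊗ₘ g')
  /-- comultiplication Δ -/
  dup : ∀ X : C, X ⟶ X ⊗ X
  /-- counit ! -/
  del : ∀ X : C, X ⟶ 𝟙_ C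
  /-- multiplication ∇ -/
  mrg : ∀ X : C, X ⊗ X ⟶ X
  /-- unit ? -/
  bng : ∀ X : C, 𝟙_ C ⟶ X
  dup_coassoc : ∀ X : C, dup X ≫ (dup X ▷ X) ≫ (α_ X X X).hom = dup X ≫ (X ◁ dup X)
  dup_del_left : ∀ X : C, dup X ≫ (del X ▷ X) = (λ_ X).inv
  dup_del_right : ∀ X : C, dup X ≫ (X ◁ del X) = (ρ_ X).inv
  dup_cocomm : ∀ X : C, dup X ≫ (β_ X X).hom = dup X
  mrg_assoc : ∀ X : C, (mrg X ▷ X) ≫ mrg X = (α_ X X X).hom ≫ (X ◁ mrg X) ≫ mrg X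
  mrg_bng_left : ∀ X : C, (bng X ▷ X) ≫ mrg X = (λ_ X).hom
  mrg_bng_right : ∀ X : C, (X ◁ bng X) ≫ mrg X = (ρ_ X).hom
  mrg_comm : ∀ X : C, (β_ X X).hom ≫ mrg X = mrg X
  dup_tensor : ∀ X Y : C, dup (X ⊗ Y) = (dup X ⊗ₘ dup Y) ≫ tensorμ X X Y Y
  del_tensor : ∀ X Y : C, del (X ⊗ Y) = (del X ⊗ₘ del Y) ≫ (λ_ (𝟙_ C)).hom
  dup_unitObj : dup (𝟙_ C) = (λ_ (𝟙_ C)).inv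
  del_unitObj : del (𝟙_ C) = 𝟙 (𝟙_ C)
  mrg_tensor : ∀ X Y : C, mrg (X ⊗ Y) = tensorμ X Y X Y ≫ (mrg X ⊗ₘ mrg Y)
  bng_tensor : ∀ X Y : C, bng (X ⊗ Y) = (λ_ (𝟙_ C)).inv ≫ (bng X ⊗ₘ bng Y)
  mrg_unitObj : mrg (𝟙_ C) = (λ_ (𝟙_ C)).hom
  bng_unitObj : bng (𝟙_ C) = 𝟙 (𝟙_ C)
  adj_dup_unit : ∀ X : C, 𝟙 X ≤ dup X ≫ mrg X
  adj_dup_counit : ∀ X : C, mrg X ≫ dup X ≤ 𝟙 (X ⊗ X)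
  adj_del_counit : ∀ X : C, bng X ≫ del X ≤ 𝟙 (𝟙_ C)
  adj_del_unit : ∀ X : C, 𝟙 X ≤ del X ≫ bng X
  frob_left : ∀ X : C, (dup X ▷ X) ≫ (α_ X X X).hom ≫ (X ◁ mrg X) = mrg X ≫ dup X
  frob_right : ∀ X : C, (X ◁ dup X) ≫ (α_ X X X).inv ≫ (mrg X ▷ X) = mrg X ≫ dup X
  lax_dup : ∀ {X Y : C} (R : X ⟶ Y), R ≫ dup Y ≤ dup X ≫ (R ⊗ₘ R)
  lax_del : ∀ {X Y : C} (R : X ⟶ Y), R ≫ del Y ≤ del X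

namespace CartesianBicatRel

variable {C : Type u} [Category.{v} C] [MonoidalCategory C] [SymmetricCategory C]
  [∀ X Y : C, PartialOrder (X ⟶ Y)] [CartesianBicatRel C]

/-- The dagger `R† : Y ⟶ X` of `R : X ⟶ Y`, built from the cup `η_X = ?;Δ` and
the cap `ε_Y = ∇;!`. -/
def dagger {X Y : C} (R : X ⟶ Y) : Y ⟶ X :=
  (λ_ Y).inv ≫ ((bng X ≫ dup X) ▷ Y) ≫ (α_ X X Y).hom ≫
    (X ◁ (R ▷ Y)) ≫ (X ◁ (mrg Y ≫ del Y)) ≫ (ρ_ X).hom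

/-- `R` is single-valued. -/
def SingleValued {X Y : C} (R : X ⟶ Y) : Prop := dup X ≫ (R ⊗ₘ R) ≤ R ≫ dup Y

/-- `R` is total. -/
def Total {X Y : C} (R : X ⟶ Y) : Prop := del X ≤ R ≫ del Y

/-- `R` is injective. -/
def Injective {X Y : C} (R : X ⟶ Y) : Prop := (R ⊗ₘ R) ≫ mrg Y ≤ mrg X ≫ R

/-- `R` is surjective. -/
def Surjective {X Y : C} (R : X ⟶ Y) : Prop := bng Y ≤ bng X ≫ R

/-- A map is a single-valued and total morphism. -/
def IsMap {X Y : C} (R : X ⟶ Y) : Prop := SingleValued R ∧ Total R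

/-- A comap is an injective and surjective morphism. -/
def IsComap {X Y : C} (R : X ⟶ Y) : Prop := Injective R ∧ Surjective R

end CartesianBicatRel

/-!
The dagger is built from the cup `?;Δ` and the cap `∇;!`, which satisfy the snake equation
by the Frobenius law. Since every morphism is a lax comonoid homomorphism, `R` can be slid
through the cup and cap: surjectivity makes the cup of `Y` smaller than the cup of `X`
followed by `R ⊗ R`, and injectivity makes `R ⊗ R` followed by the cap of `Y` smaller than
the cap of `X`, which yields the unit and counit of `R† ⊣ R`. Conversely, every morphism is
also a colax monoid homomorphism, so any left adjoint `S` of `R` forces `R` to be injective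
and surjective; and left adjoints in a poset-enriched category are unique.
-/

namespace CartesianBicatRel

variable {C : Type u} [Category.{v} C] [MonoidalCategory C] [SymmetricCategory C]
  [∀ X Y : C, PartialOrder (X ⟶ Y)] [CartesianBicatRel C]

attribute [gcongr] comp_mono tensor_mono

@[gcongr]
lemma whiskerLeft_mono (X : C) {Y Z : C} {f g : Y ⟶ Z} (h : f ≤ g) : X ◁ f ≤ X ◁ g := by
  simpa only [id_tensorHom] using tensor_mono (le_refl (𝟙 X)) h

@[gcongr]
lemma whiskerRight_mono {Y Z : C} {f g : Y ⟶ Z} (h : f ≤ g) (X : C) : f ▷ X ≤ g ▷ X := by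
  simpa only [tensorHom_id] using tensor_mono h (le_refl (𝟙 X))

lemma snake (X : C) :
    (λ_ X).inv ≫ ((bng X ≫ dup X) ▷ X) ≫ (α_ X X X).hom ≫
      (X ◁ (mrg X ≫ del X)) ≫ (ρ_ X).hom = 𝟙 X := by
  calc _ = (λ_ X).inv ≫ bng X ▷ X ≫ (dup X ▷ X ≫ (α_ X X X).hom ≫ X ◁ mrg X) ≫
          X ◁ del X ≫ (ρ_ X).hom := by
        simp only [comp_whiskerRight, MonoidalCategory.whiskerLeft_comp, Category.assoc]
    _ = (λ_ X).inv ≫ (bng X ▷ X ≫ mrg X) ≫ (dup X ≫ X ◁ del X) ≫ (ρ_ X).hom := by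
        rw [frob_left]; simp only [Category.assoc]
    _ = 𝟙 X := by rw [mrg_bng_left, dup_del_right]; simp

lemma comp_dagger {X Y : C} (R : X ⟶ Y) :
    R ≫ dagger R = (λ_ X).inv ≫ ((bng X ≫ dup X) ▷ X) ≫ (α_ X X X).hom ≫
      (X ◁ ((R ⊗ₘ R) ≫ mrg Y ≫ del Y)) ≫ (ρ_ X).hom := by
  rw [dagger, ← Category.assoc, leftUnitor_inv_naturality]
  simp only [Category.assoc]
  rw [whisker_exchange_assoc, associator_naturality_right_assoc]
  simp only [tensorHom_def', MonoidalCategory.whiskerLeft_comp, Category.assoc]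

lemma dagger_comp {X Y : C} (R : X ⟶ Y) :
    dagger R ≫ R = (λ_ Y).inv ≫ ((bng X ≫ dup X ≫ (R ⊗ₘ R)) ▷ Y) ≫ (α_ Y Y Y).hom ≫
      (Y ◁ (mrg Y ≫ del Y)) ≫ (ρ_ Y).hom := by
  simp only [dagger, Category.assoc]
  rw [← rightUnitor_naturality, whisker_exchange_assoc, whisker_exchange_assoc,
    ← associator_naturality_left_assoc, ← associator_naturality_middle_assoc]
  simp only [MonoidalCategory.tensorHom_def, comp_whiskerRight, Category.assoc]

lemma Injective.tensor_comp_cap_le {X Y : C} {R : X ⟶ Y} (h : Injective R) :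
    (R ⊗ₘ R) ≫ mrg Y ≫ del Y ≤ mrg X ≫ del X :=
  calc (R ⊗ₘ R) ≫ mrg Y ≫ del Y = ((R ⊗ₘ R) ≫ mrg Y) ≫ del Y := (Category.assoc _ _ _).symm
    _ ≤ (mrg X ≫ R) ≫ del Y := by gcongr; exact h
    _ = mrg X ≫ R ≫ del Y := Category.assoc _ _ _
    _ ≤ mrg X ≫ del X := by gcongr; exact lax_del R

lemma Surjective.cup_le_cup_comp_tensor {X Y : C} {R : X ⟶ Y} (h : Surjective R) :
    bng Y ≫ dup Y ≤ bng X ≫ dup X ≫ (R ⊗ₘ R) :=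
  calc bng Y ≫ dup Y ≤ (bng X ≫ R) ≫ dup Y := by gcongr; exact h
    _ = bng X ≫ R ≫ dup Y := Category.assoc _ _ _
    _ ≤ bng X ≫ dup X ≫ (R ⊗ₘ R) := by gcongr; exact lax_dup R

lemma Injective.comp_dagger_le {X Y : C} {R : X ⟶ Y} (h : Injective R) :
    R ≫ dagger R ≤ 𝟙 X := by
  rw [comp_dagger, ← snake X]
  gcongr
  exact h.tensor_comp_cap_le

lemma Surjective.le_dagger_comp {X Y : C} {R : X ⟶ Y} (h : Surjective R) :
    𝟙 Y ≤ dagger R ≫ R := by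
  rw [dagger_comp, ← snake Y]
  gcongr
  exact h.cup_le_cup_comp_tensor

lemma mrg_comp_le {X Y : C} (U : Y ⟶ X) : mrg Y ≫ U ≤ (U ⊗ₘ U) ≫ mrg X :=
  calc mrg Y ≫ U = mrg Y ≫ U ≫ 𝟙 X := by simp
    _ ≤ mrg Y ≫ U ≫ dup X ≫ mrg X := by gcongr; exact adj_dup_unit X
    _ = mrg Y ≫ (U ≫ dup X) ≫ mrg X := by simp only [Category.assoc]
    _ ≤ mrg Y ≫ (dup Y ≫ (U ⊗ₘ U)) ≫ mrg X := by gcongr; exact lax_dup U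
    _ = (mrg Y ≫ dup Y) ≫ (U ⊗ₘ U) ≫ mrg X := by simp only [Category.assoc]
    _ ≤ 𝟙 _ ≫ (U ⊗ₘ U) ≫ mrg X := by gcongr; exact adj_dup_counit Y
    _ = (U ⊗ₘ U) ≫ mrg X := Category.id_comp _

lemma bng_comp_le {X Y : C} (U : Y ⟶ X) : bng Y ≫ U ≤ bng X :=
  calc bng Y ≫ U = bng Y ≫ U ≫ 𝟙 X := by simp
    _ ≤ bng Y ≫ U ≫ del X ≫ bng X := by gcongr; exact adj_del_unit X
    _ = bng Y ≫ (U ≫ del X) ≫ bng X := by simp only [Category.assoc]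
    _ ≤ bng Y ≫ del Y ≫ bng X := by gcongr; exact lax_del U
    _ = (bng Y ≫ del Y) ≫ bng X := by simp only [Category.assoc]
    _ ≤ 𝟙 _ ≫ bng X := by gcongr; exact adj_del_counit Y
    _ = bng X := Category.id_comp _

section Adjunction

variable {X Y : C} {R : X ⟶ Y} {S : Y ⟶ X}

lemma injective_of_adjoint (hunit : 𝟙 Y ≤ S ≫ R) (hcounit : R ≫ S ≤ 𝟙 X) : Injective R :=
  calc (R ⊗ₘ R) ≫ mrg Y = (R ⊗ₘ R) ≫ mrg Y ≫ 𝟙 Y := by simp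
    _ ≤ (R ⊗ₘ R) ≫ (mrg Y ≫ S) ≫ R := by rw [Category.assoc]; gcongr
    _ ≤ (R ⊗ₘ R) ≫ ((S ⊗ₘ S) ≫ mrg X) ≫ R := by gcongr; exact mrg_comp_le S
    _ = ((R ≫ S) ⊗ₘ (R ≫ S)) ≫ mrg X ≫ R := by
        simp only [← tensorHom_comp_tensorHom, Category.assoc]
    _ ≤ (𝟙 X ⊗ₘ 𝟙 X) ≫ mrg X ≫ R := by gcongr
    _ = mrg X ≫ R := by simp

lemma surjective_of_adjoint (hunit : 𝟙 Y ≤ S ≫ R) : Surjective R :=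
  calc bng Y = bng Y ≫ 𝟙 Y := by simp
    _ ≤ (bng Y ≫ S) ≫ R := by rw [Category.assoc]; gcongr
    _ ≤ bng X ≫ R := by gcongr; exact bng_comp_le S

lemma le_of_adjoint {S' : Y ⟶ X} (hunit : 𝟙 Y ≤ S' ≫ R) (hcounit : R ≫ S ≤ 𝟙 X) :
    S ≤ S' :=
  calc S = 𝟙 Y ≫ S := (Category.id_comp S).symm
    _ ≤ (S' ≫ R) ≫ S := by gcongr
    _ = S' ≫ R ≫ S := Category.assoc _ _ _
    _ ≤ S' ≫ 𝟙 X := by gcongr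
    _ = S' := Category.comp_id S'

end Adjunction

end CartesianBicatRel

open CartesianBicatRel in
/-- `R` is a comap iff it has a left adjoint, and in that case the left adjoint is `R†`. -/
theorem comap_iff_left_adjoint {C : Type u} [Category.{v} C] [MonoidalCategory C]
    [SymmetricCategory C] [∀ X Y : C, PartialOrder (X ⟶ Y)] [CartesianBicatRel C]
    {X Y : C} (R : X ⟶ Y) :
    (IsComap R ↔ ∃ S : Y ⟶ X, 𝟙 Y ≤ S ≫ R ∧ R ≫ S ≤ 𝟙 X) ∧
    (∀ S : Y ⟶ X, 𝟙 Y ≤ S ≫ R → R ≫ S ≤ 𝟙 X → S = dagger R) := by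
  refine ⟨⟨fun ⟨hinj, hsurj⟩ => ⟨dagger R, hsurj.le_dagger_comp, hinj.comp_dagger_le⟩, ?_⟩, ?_⟩
  · rintro ⟨S, hunit, hcounit⟩
    exact ⟨injective_of_adjoint hunit hcounit, surjective_of_adjoint hunit⟩
  · intro S hunit hcounit
    have hinj := injective_of_adjoint hunit hcounit
    have hsurj := surjective_of_adjoint hunit
    exact le_antisymm (le_of_adjoint hsurj.le_dagger_comp hcounit)
      (le_of_adjoint hunit hinj.comp_dagger_le)
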